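/- (Homogeneous relations with the zero-level elements.) Under the exchange relation for the block matrix M and invertibility of M12: for every k ≥ 0, R_{n₂}·(T⁻₁ ⊠ T⁺_k) = (T⁻₁ ⊠' T⁺_k)·R_{n₁} and R_{n₂}·(T⁺_k ⊠ T⁺₀) = (T⁺_k ⊠' T⁺₀)·R_{n₁}; and for every k ≥ 1, R_{n₂}·(T⁻₁ ⊠ T⁻_k) = (T⁻₁ ⊠' T⁻_k)·R_{n₁} and R_{n₂}·(T⁻_k ⊠ T⁺₀) = (T⁻_k ⊠' T⁺₀)·R_{n₁}. -/

import Mathlib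

open Matrix

variable {A : Type*} [Ring A]

/-- Kulish–Sklyanin trigonometric R-matrix with deformation parameter `q`
(`qi` denotes the inverse of `q`). -/
def Rmat (A : Type*) [Ring A] (q qi : A) (n : ℕ) :
    Matrix (Fin n × Fin n) (Fin n × Fin n) A := fun x y =>
  if x.1 = x.2 ∧ x.2 = y.1 ∧ y.1 = y.2 then q
  else if x.1 = y.1 ∧ x.2 = y.2 then 1
  else if x.1 = y.2 ∧ x.2 = y.1 ∧ x.2 < x.1 then q - qi
  else 0

/-- Permutation-type matrix with (possibly) rectangular tensor indices. -/
def PmatG (A : Type*) [Ring A] (m n : ℕ) :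
    Matrix (Fin m × Fin n) (Fin n × Fin m) A := fun x y =>
  if x.1 = y.2 ∧ x.2 = y.1 then 1 else 0

/-- The permutation matrix `P`. -/
def Pmat (A : Type*) [Ring A] (n : ℕ) :
    Matrix (Fin n × Fin n) (Fin n × Fin n) A := PmatG A n n

/-- Kronecker product `X ⊠ Y` : entry at `((i,a),(j,b))` is `X i j * Y a b`. -/
def kron {I J K L : Type*} (X : Matrix I J A) (Y : Matrix K L A) :
    Matrix (I × K) (J × L) A := fun p r => X p.1 r.1 * Y p.2 r.2

/-- Opposite-order Kronecker product `X ⊠' Y` : entry at `((i,a),(j,b))` is `Y a b * X i j`. -/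
def kron' {I J K L : Type*} (X : Matrix I J A) (Y : Matrix K L A) :
    Matrix (I × K) (J × L) A := fun p r => Y p.2 r.2 * X p.1 r.1

/-- Positive-level transport matrices: `T⁺₀ = M21`, `T⁺_k = M22 · M12^(k-1) · M11` for `k ≥ 1`. -/
def Tpos {m n₁ n₂ : ℕ} (M11 : Matrix (Fin m) (Fin n₁) A) (M12 : Matrix (Fin m) (Fin m) A)
    (M21 : Matrix (Fin n₂) (Fin n₁) A) (M22 : Matrix (Fin n₂) (Fin m) A) :
    ℕ → Matrix (Fin n₂) (Fin n₁) A
  | 0 => M21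
  | k + 1 => M22 * M12 ^ k * M11

/-- Negative-level transport matrices, where `N` is the inverse of `M12`:
`T⁻₀ = 0`, `T⁻₁ = M22·N·M11 − M21`, `T⁻_k = M22·N^k·M11` for `k ≥ 2`. -/
def Tneg {m n₁ n₂ : ℕ} (M11 : Matrix (Fin m) (Fin n₁) A) (N : Matrix (Fin m) (Fin m) A)
    (M21 : Matrix (Fin n₂) (Fin n₁) A) (M22 : Matrix (Fin n₂) (Fin m) A) :
    ℕ → Matrix (Fin n₂) (Fin n₁) A
  | 0 => 0
  | 1 => M22 * N * M11 - M21
  | k + 2 => M22 * N ^ (k + 2) * M11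

/-!
In sheet notation `¹X = X ⊠ 1`, `²Y = 1 ⊠ Y` one has `X ⊠ Y = ¹X ²Y` and `X ⊠' Y = ²Y ¹X`, and
exchange relations compose: `S ¹X ²Y = ²Y ¹X` and `¹X ²Z = ²Z ¹X T` give
`S ¹X ²(YZ) = ²(YZ) ¹X T`, and similarly in the first leg. Reading the RTT relation for `M` block
by block gives exchange relations between the blocks, some of them with a correction term
`(q - q⁻¹) P (…)`. Conjugating by `¹N = (¹M12)⁻¹` and using `R⁻¹ P = P R - (q - q⁻¹)`, one finds
for `L = T⁻₁ = M22 N M11 - M21` that `¹L ²M11 = ²M11 ¹L R`, `R ¹L ²M22 = ²M22 ¹L` and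
`¹L ²M12 = ²M12 ¹L`: in each case the correction terms of `M22 N M11` and of `M21` are equal and
cancel. Since `M21` and `L` commute entrywise with `M12`, hence with `N` and all powers, factoring
`T⁺ₖ = M22 M12^(k-1) M11` and `T⁻ₖ = M22 N^k M11` reduces every claimed relation to these.
-/

section Kronecker

variable {I J K L J' L' : Type*}

theorem kron_mul_kron [Fintype J] [Fintype L] (X : Matrix I J A) (Y : Matrix K L A)
    (X' : Matrix J J' A) (Y' : Matrix L L' A) (h : ∀ a b i j, Commute (Y a b) (X' i j)) :
    kron X Y * kron X' Y' = kron (X * X') (Y * Y') := by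
  ext ⟨i, a⟩ ⟨j, b⟩
  simp only [kron, mul_apply, Fintype.sum_prod_type, Finset.sum_mul_sum]
  refine Finset.sum_congr rfl fun l _ => Finset.sum_congr rfl fun c _ => ?_
  rw [mul_assoc, ← mul_assoc (Y a c), (h a c l j).eq, mul_assoc, mul_assoc]

theorem kron_one_mul_kron [Fintype J] [Fintype K] [DecidableEq K] (X : Matrix I J A)
    (X' : Matrix J J' A) (Y : Matrix K L A) :
    kron X (1 : Matrix K K A) * kron X' Y = kron (X * X') Y := by
  rw [kron_mul_kron _ _ _ _ fun a b _ _ => ?_, Matrix.one_mul]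
  by_cases h : a = b <;> simp [one_apply, h]

theorem kron_mul_one_kron [Fintype J] [DecidableEq J] [Fintype L] (X : Matrix I J A)
    (Y : Matrix K L A) (Y' : Matrix L L' A) :
    kron X Y * kron (1 : Matrix J J A) Y' = kron X (Y * Y') := by
  rw [kron_mul_kron _ _ _ _ fun _ _ a b => ?_, Matrix.mul_one]
  by_cases h : a = b <;> simp [one_apply, h]

theorem kron_one_one [DecidableEq I] [DecidableEq K] :
    kron (1 : Matrix I I A) (1 : Matrix K K A) = 1 := by
  ext ⟨i, a⟩ ⟨j, b⟩
  by_cases h : i = j <;> by_cases h' : a = b <;> simp [kron, one_apply, h, h']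

theorem kron_eq_kron_one_mul_one_kron [Fintype J] [DecidableEq J] [Fintype K] [DecidableEq K]
    (X : Matrix I J A) (Y : Matrix K L A) :
    kron X Y = kron X (1 : Matrix K K A) * kron (1 : Matrix J J A) Y := by
  rw [kron_one_mul_kron, Matrix.mul_one]

theorem kron'_eq_one_kron_mul_kron_one [Fintype I] [DecidableEq I] [Fintype L] [DecidableEq L]
    (X : Matrix I J A) (Y : Matrix K L A) :
    kron' X Y = kron (1 : Matrix I I A) Y * kron X (1 : Matrix L L A) := by
  ext ⟨i, a⟩ ⟨j, b⟩
  simp [kron, kron', mul_apply, Fintype.sum_prod_type, one_apply]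

theorem kron'_mul_kron_one [Fintype I] [DecidableEq I] [Fintype J] [Fintype L] [DecidableEq L]
    (X : Matrix I J A) (X' : Matrix J J' A) (Y : Matrix K L A) :
    kron' X Y * kron X' (1 : Matrix L L A) = kron' (X * X') Y := by
  rw [kron'_eq_one_kron_mul_kron_one, Matrix.mul_assoc, kron_one_mul_kron,
    kron'_eq_one_kron_mul_kron_one]

theorem kron_eq_kron'_iff (X : Matrix I J A) (Y : Matrix K L A) :
    kron X Y = kron' X Y ↔ ∀ i j a b, Commute (X i j) (Y a b) :=
  ⟨fun h i j a b => congrFun (congrFun h (i, a)) (j, b), fun h => by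
    ext ⟨i, a⟩ ⟨j, b⟩; exact h i j a b⟩

theorem kron_sub_left (X X' : Matrix I J A) (Y : Matrix K L A) :
    kron (X - X') Y = kron X Y - kron X' Y := by
  ext; simp [kron, sub_mul]

theorem kron_sub_right (X : Matrix I J A) (Y Y' : Matrix K L A) :
    kron X (Y - Y') = kron X Y - kron X Y' := by
  ext; simp [kron, mul_sub]

theorem kron'_sub_left (X X' : Matrix I J A) (Y : Matrix K L A) :
    kron' (X - X') Y = kron' X Y - kron' X' Y := by
  ext; simp [kron', mul_sub]

theorem kron'_sub_right (X : Matrix I J A) (Y Y' : Matrix K L A) :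
    kron' X (Y - Y') = kron' X Y - kron' X Y' := by
  ext; simp [kron', sub_mul]

end Kronecker

section Exch

variable {I J K L : Type*} [Fintype I] [Fintype J] [Fintype K] [Fintype L]

/-- The exchange relation `S ¹X ²Y = ²Y ¹X T`. -/
def Exch (S : Matrix (I × K) (I × K) A) (X : Matrix I J A) (Y : Matrix K L A)
    (T : Matrix (J × L) (J × L) A) : Prop :=
  S * kron X Y = kron' X Y * T

theorem Exch.sub_left {S : Matrix (I × K) (I × K) A} {X X' : Matrix I J A} {Y : Matrix K L A}
    {T : Matrix (J × L) (J × L) A} (h : Exch S X Y T) (h' : Exch S X' Y T) :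
    Exch S (X - X') Y T := by
  rw [Exch, kron_sub_left, kron'_sub_left, Matrix.mul_sub, Matrix.sub_mul, h, h']

theorem Exch.sub_right {S : Matrix (I × K) (I × K) A} {X : Matrix I J A} {Y Y' : Matrix K L A}
    {T : Matrix (J × L) (J × L) A} (h : Exch S X Y T) (h' : Exch S X Y' T) :
    Exch S X (Y - Y') T := by
  rw [Exch, kron_sub_right, kron'_sub_right, Matrix.mul_sub, Matrix.sub_mul, h, h']

variable [DecidableEq I] [DecidableEq J] [DecidableEq L]

theorem Exch.mul_right {L' : Type*} [Fintype L'] [DecidableEq L'] {S : Matrix (I × K) (I × K) A}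
    {X : Matrix I J A} {Y : Matrix K L A} {Y' : Matrix L L' A} {T : Matrix (J × L') (J × L') A}
    (h : Exch S X Y 1) (h' : Exch 1 X Y' T) : Exch S X (Y * Y') T := by
  rw [Exch, Matrix.mul_one] at h
  rw [Exch, Matrix.one_mul] at h'
  calc S * kron X (Y * Y') = S * kron X Y * kron (1 : Matrix J J A) Y' := by
        rw [Matrix.mul_assoc, kron_mul_one_kron]
    _ = kron (1 : Matrix I I A) Y * kron X Y' := by
        rw [h, kron'_eq_one_kron_mul_kron_one, Matrix.mul_assoc, kron_mul_one_kron, Matrix.one_mul]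
    _ = kron' X (Y * Y') * T := by
        rw [h', kron'_eq_one_kron_mul_kron_one, kron'_eq_one_kron_mul_kron_one]
        simp only [← Matrix.mul_assoc]
        rw [kron_mul_one_kron]

variable [DecidableEq K]

theorem exch_one_one_iff (X : Matrix I J A) (Y : Matrix K L A) :
    Exch 1 X Y 1 ↔ ∀ i j a b, Commute (X i j) (Y a b) := by
  rw [Exch, Matrix.one_mul, Matrix.mul_one, kron_eq_kron'_iff]

theorem Exch.symm {X : Matrix I J A} {Y : Matrix K L A} (h : Exch 1 X Y 1) : Exch 1 Y X 1 := by
  rw [exch_one_one_iff] at h ⊢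
  exact fun a b i j => (h i j a b).symm

theorem Exch.mul_left {J' : Type*} [Fintype J'] [DecidableEq J'] {S : Matrix (I × K) (I × K) A}
    {X : Matrix I J A} {X' : Matrix J J' A} {Y : Matrix K L A} {T : Matrix (J' × L) (J' × L) A}
    (h : Exch S X Y 1) (h' : Exch 1 X' Y T) : Exch S (X * X') Y T := by
  rw [Exch, Matrix.mul_one] at h
  rw [Exch, Matrix.one_mul] at h'
  calc S * kron (X * X') Y = S * (kron X (1 : Matrix K K A) * kron X' Y) := by
        rw [kron_one_mul_kron]
    _ = S * kron X Y * kron X' (1 : Matrix L L A) * T := by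
        rw [h', kron'_eq_one_kron_mul_kron_one, kron_eq_kron_one_mul_one_kron X Y]
        simp only [Matrix.mul_assoc]
    _ = kron' (X * X') Y * T := by
        rw [h, kron'_mul_kron_one]

theorem Exch.pow_left {B : Matrix I I A} {Y : Matrix K L A} (h : Exch 1 B Y 1) (k : ℕ) :
    Exch 1 (B ^ k) Y 1 := by
  induction k with
  | zero =>
    rw [pow_zero, exch_one_one_iff]
    intro i j a b
    by_cases hij : i = j <;> simp [one_apply, hij]
  | succ k ih => rw [pow_succ]; exact ih.mul_left h

theorem Exch.inv_conj {B N : Matrix I I A} {Y : Matrix K L A} {S S' : Matrix (I × K) (I × K) A}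
    {T T' : Matrix (I × L) (I × L) A} (h : Exch S B Y T) (hS : S' * S = 1) (hT : T * T' = 1)
    (hNB : N * B = 1) (hBN : B * N = 1) :
    kron N (1 : Matrix K K A) * S' * kron (1 : Matrix I I A) Y =
      kron (1 : Matrix I I A) Y * T' * kron N (1 : Matrix L L A) := by
  rw [Exch] at h
  have h' : S' * kron' B Y = kron B Y * T' :=
    calc S' * kron' B Y = S' * (kron' B Y * T) * T' := by
          rw [Matrix.mul_assoc, Matrix.mul_assoc, hT, Matrix.mul_one]
      _ = kron B Y * T' := by rw [← h, ← Matrix.mul_assoc, hS, Matrix.one_mul]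
  calc kron N (1 : Matrix K K A) * S' * kron (1 : Matrix I I A) Y
      = kron N (1 : Matrix K K A) * (S' * kron' B Y) * kron N (1 : Matrix L L A) := by
        rw [kron'_eq_one_kron_mul_kron_one]
        simp only [Matrix.mul_assoc]
        rw [kron_one_mul_kron, hBN, kron_one_one, Matrix.mul_one]
    _ = kron (1 : Matrix I I A) Y * T' * kron N (1 : Matrix L L A) := by
        rw [h', kron_eq_kron_one_mul_one_kron B Y]
        simp only [← Matrix.mul_assoc]
        rw [kron_one_mul_kron, hNB, kron_one_one, Matrix.one_mul]

theorem Exch.inv_left {B N : Matrix I I A} {Y : Matrix K L A} (h : Exch 1 B Y 1) (hNB : N * B = 1)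
    (hBN : B * N = 1) : Exch 1 N Y 1 := by
  have := h.inv_conj (Matrix.mul_one 1) (Matrix.mul_one 1) hNB hBN
  rw [Exch, kron_eq_kron_one_mul_one_kron, kron'_eq_one_kron_mul_kron_one]
  simpa using this

end Exch

theorem mul_smul_of_commute {I J K : Type*} [Fintype J] {t : A} (ht : ∀ a : A, Commute t a)
    (X : Matrix I J A) (Y : Matrix J K A) : X * (t • Y) = t • (X * Y) := by
  ext i k
  simp only [Matrix.smul_apply, mul_apply, smul_eq_mul, ← mul_assoc, (ht _).eq, Finset.sum_mul]

section Rmat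

variable (q qi : A) {n : ℕ}

theorem Rmat_apply_eq_add (p r : Fin n × Fin n) :
    Rmat A q qi n p r = (if r = p then (if p.1 = p.2 then q else 1) else 0) +
      if p.2 < p.1 ∧ r = p.swap then q - qi else 0 := by
  obtain ⟨a, b⟩ := p
  obtain ⟨c, d⟩ := r
  simp only [Rmat, Prod.mk.injEq, Prod.swap_prod_mk]
  split_ifs <;> first | rfl | (exfalso; omega) | simp

theorem Rmat_mul_apply {C : Type*} (X : Matrix (Fin n × Fin n) C A) (p : Fin n × Fin n) (r : C) :
    (Rmat A q qi n * X) p r =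
      (if p.1 = p.2 then q else 1) * X p r + if p.2 < p.1 then (q - qi) * X p.swap r else 0 := by
  by_cases h : p.2 < p.1 <;>
    simp [mul_apply, Rmat_apply_eq_add, add_mul, Finset.sum_add_distrib, h]

theorem mul_Rmat_apply {C : Type*} (X : Matrix C (Fin n × Fin n) A) (p : C) (r : Fin n × Fin n) :
    (X * Rmat A q qi n) p r =
      X p r * (if r.1 = r.2 then q else 1) + if r.1 < r.2 then X p r.swap * (q - qi) else 0 := by
  have key : ∀ c : Fin n × Fin n, (c.2 < c.1 ∧ r = c.swap) ↔ (r.1 < r.2 ∧ c = r.swap) := by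
    rintro ⟨a, b⟩; obtain ⟨c, d⟩ := r; simp only [Prod.swap_prod_mk, Prod.mk.injEq]; grind
  by_cases h : r.1 < r.2 <;>
    simp [mul_apply, Rmat_apply_eq_add, mul_add, Finset.sum_add_distrib, key, h]

theorem Rmat_mul_Rmat (h : q * qi = 1) : Rmat A q qi n * Rmat A qi q n = 1 := by
  ext ⟨a, b⟩ ⟨c, d⟩
  rw [Rmat_mul_apply]
  simp only [Rmat, one_apply, Prod.mk.injEq, Prod.swap_prod_mk]
  split_ifs <;> first | rfl | (exfalso; omega) | simp [h]

end Rmat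

section PmatG

variable {m n : ℕ}

theorem PmatG_mul_apply {C : Type*} (X : Matrix (Fin n × Fin m) C A) (p : Fin m × Fin n) (r : C) :
    (PmatG A m n * X) p r = X p.swap r := by
  rw [mul_apply, Finset.sum_eq_single p.swap] <;> aesop (add simp PmatG)

theorem mul_PmatG_apply {C : Type*} (X : Matrix C (Fin m × Fin n) A) (p : C) (r : Fin n × Fin m) :
    (X * PmatG A m n) p r = X p r.swap := by
  rw [mul_apply, Finset.sum_eq_single r.swap] <;> aesop (add simp PmatG)

theorem PmatG_mul_PmatG : PmatG A m n * PmatG A n m = 1 := by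
  ext p r
  rw [PmatG_mul_apply]
  simp [PmatG, one_apply, Prod.ext_iff, and_comm]

theorem kron_one_mul_PmatG {k : ℕ} (X : Matrix (Fin m) (Fin k) A) :
    kron X (1 : Matrix (Fin n) (Fin n) A) * PmatG A k n =
      PmatG A m n * kron (1 : Matrix (Fin n) (Fin n) A) X := by
  ext p r
  rw [mul_PmatG_apply, PmatG_mul_apply]
  by_cases h : p.2 = r.1 <;> simp [kron, one_apply, h]

theorem kron_one_mul_PmatG_mul_kron' {a b c k l : ℕ} (X : Matrix (Fin k) (Fin l) A)
    (Y : Matrix (Fin a) (Fin b) A) (Z : Matrix (Fin l) (Fin c) A) :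
    kron X (1 : Matrix (Fin a) (Fin a) A) * (PmatG A l a * kron' Y Z) =
      PmatG A k a * kron' Y (X * Z) := by
  rw [← Matrix.mul_assoc, kron_one_mul_PmatG, Matrix.mul_assoc, kron'_eq_one_kron_mul_kron_one,
    ← Matrix.mul_assoc (kron _ X), kron_mul_one_kron, ← kron'_eq_one_kron_mul_kron_one]

theorem PmatG_mul_kron' {a b c d : ℕ} (X : Matrix (Fin a) (Fin b) A)
    (Y : Matrix (Fin c) (Fin d) A) :
    PmatG A c a * kron' X Y = kron Y X * PmatG A d b := by
  ext p r
  rw [PmatG_mul_apply, mul_PmatG_apply]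
  rfl

theorem kron'_mul_PmatG {a b c d : ℕ} (X : Matrix (Fin a) (Fin b) A)
    (Y : Matrix (Fin c) (Fin d) A) :
    kron' Y X * PmatG A d b = PmatG A c a * kron X Y := by
  ext p r
  rw [PmatG_mul_apply, mul_PmatG_apply]
  rfl

theorem Rmat_inv_mul_PmatG (q qi : A) :
    Rmat A qi q n * PmatG A n n = PmatG A n n * Rmat A q qi n - (q - qi) • 1 := by
  ext ⟨a, b⟩ ⟨c, d⟩
  rw [Rmat_mul_apply, Matrix.sub_apply, PmatG_mul_apply, Matrix.smul_apply]
  simp only [Rmat, PmatG, one_apply, Prod.mk.injEq, Prod.swap_prod_mk]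
  split_ifs <;> first | (exfalso; omega) | simp

end PmatG

theorem eq_Rmat_inv_mul_add_of_Rmat_mul {n : ℕ} {C : Type*} {q qi : A}
    (hθ : ∀ a : A, Commute (q - qi) a) (hqinv' : qi * q = 1)
    {Z Z' : Matrix (Fin n × Fin n) C A}
    (h : Rmat A q qi n * Z = Z' + (q - qi) • (PmatG A n n * Z)) :
    Z = Rmat A qi q n * Z' + (q - qi) • (PmatG A n n * Z') :=
  calc Z = Rmat A qi q n * (Rmat A q qi n * Z) := by
        rw [← Matrix.mul_assoc, Rmat_mul_Rmat qi q hqinv', Matrix.one_mul]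
    _ = Rmat A qi q n * Z' + (q - qi) • (Rmat A qi q n * PmatG A n n * Z) := by
        rw [h, Matrix.mul_add, mul_smul_of_commute hθ, Matrix.mul_assoc]
    _ = Rmat A qi q n * Z' + (q - qi) • (PmatG A n n * Z') := by
        rw [Rmat_inv_mul_PmatG, Matrix.sub_mul, Matrix.mul_assoc, h, Matrix.mul_add,
          mul_smul_of_commute hθ, ← Matrix.mul_assoc (PmatG A n n), PmatG_mul_PmatG, Matrix.one_mul,
          Matrix.smul_mul, Matrix.one_mul, add_sub_cancel_right]

theorem finSumFinEquiv_lt_finSumFinEquiv {m n : ℕ} {x y : Fin m ⊕ Fin n} :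
    finSumFinEquiv x < finSumFinEquiv y ↔ toLex x < toLex y := by
  rcases x with a | a <;> rcases y with b | b <;> simp [← Fin.val_fin_lt] <;> omega

def IsRTT (q qi : A) {k l : ℕ} (M : Matrix (Fin k) (Fin l) A) : Prop :=
  Exch (Rmat A q qi k) M M (Rmat A q qi l)

theorem IsRTT.apply {q qi : A} {k l : ℕ} {M : Matrix (Fin k) (Fin l) A} (h : IsRTT q qi M)
    (x y : Fin k) (u v : Fin l) :
    (if x = y then q else 1) * (M x u * M y v) + (if y < x then (q - qi) * (M y u * M x v) else 0) =
      M y v * M x u * (if u = v then q else 1) + if u < v then M y u * M x v * (q - qi) else 0 := by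
  simpa [kron, kron', Rmat_mul_apply, mul_Rmat_apply] using congrFun (congrFun h (x, y)) (u, v)

theorem IsRTT.block_apply {q qi : A} {m n₁ n₂ : ℕ} {M : Matrix (Fin m ⊕ Fin n₂) (Fin n₁ ⊕ Fin m) A}
    (h : IsRTT q qi (reindex finSumFinEquiv finSumFinEquiv M)) (x y : Fin m ⊕ Fin n₂)
    (u v : Fin n₁ ⊕ Fin m) :
    (if x = y then q else 1) * (M x u * M y v) +
        (if toLex y < toLex x then (q - qi) * (M y u * M x v) else 0) =
      M y v * M x u * (if u = v then q else 1) +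
        if toLex u < toLex v then M y u * M x v * (q - qi) else 0 := by
  have := h.apply (finSumFinEquiv x) (finSumFinEquiv y) (finSumFinEquiv u) (finSumFinEquiv v)
  simpa only [reindex_apply, submatrix_apply, Equiv.symm_apply_apply,
    EmbeddingLike.apply_eq_iff_eq, finSumFinEquiv_lt_finSumFinEquiv] using this

section Blocks

variable {m n₁ n₂ : ℕ} {q qi : A} {M11 : Matrix (Fin m) (Fin n₁) A}
  {M12 N : Matrix (Fin m) (Fin m) A} {M21 : Matrix (Fin n₂) (Fin n₁) A}
  {M22 : Matrix (Fin n₂) (Fin m) A}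

local notation "𝕄" => reindex finSumFinEquiv finSumFinEquiv (fromBlocks M11 M12 M21 M22)

theorem IsRTT.block_11_11 (hM : IsRTT q qi 𝕄) :
    Exch (Rmat A q qi m) M11 M11 (Rmat A q qi n₁) := by
  ext ⟨x, y⟩ ⟨u, v⟩
  simpa [kron, kron', Rmat_mul_apply, mul_Rmat_apply, PmatG_mul_apply] using
    hM.block_apply (.inl x) (.inl y) (.inl u) (.inl v)

theorem IsRTT.block_12_12 (hM : IsRTT q qi 𝕄) :
    Exch (Rmat A q qi m) M12 M12 (Rmat A q qi m) := by
  ext ⟨x, y⟩ ⟨u, v⟩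
  simpa [kron, kron', Rmat_mul_apply, mul_Rmat_apply, PmatG_mul_apply] using
    hM.block_apply (.inl x) (.inl y) (.inr u) (.inr v)

theorem IsRTT.block_22_22 (hM : IsRTT q qi 𝕄) :
    Exch (Rmat A q qi n₂) M22 M22 (Rmat A q qi m) := by
  ext ⟨x, y⟩ ⟨u, v⟩
  simpa [kron, kron', Rmat_mul_apply, mul_Rmat_apply, PmatG_mul_apply] using
    hM.block_apply (.inr x) (.inr y) (.inr u) (.inr v)

theorem IsRTT.block_21_21 (hM : IsRTT q qi 𝕄) :
    Exch (Rmat A q qi n₂) M21 M21 (Rmat A q qi n₁) := by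
  ext ⟨x, y⟩ ⟨u, v⟩
  simpa [kron, kron', Rmat_mul_apply, mul_Rmat_apply, PmatG_mul_apply] using
    hM.block_apply (.inr x) (.inr y) (.inl u) (.inl v)

theorem IsRTT.block_12_21 (hM : IsRTT q qi 𝕄) :
    Exch 1 M12 M21 1 := by
  ext ⟨x, y⟩ ⟨u, v⟩
  simpa [kron, kron', Rmat_mul_apply, mul_Rmat_apply, PmatG_mul_apply] using
    hM.block_apply (.inl x) (.inr y) (.inr u) (.inl v)

theorem IsRTT.block_11_21 (hM : IsRTT q qi 𝕄) :
    Exch 1 M11 M21 (Rmat A q qi n₁) := by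
  ext ⟨x, y⟩ ⟨u, v⟩
  simpa [kron, kron', Rmat_mul_apply, mul_Rmat_apply, PmatG_mul_apply] using
    hM.block_apply (.inl x) (.inr y) (.inl u) (.inl v)

theorem IsRTT.block_21_11 (hM : IsRTT q qi 𝕄) :
    kron M21 M11 + (q - qi) • (PmatG A n₂ m * kron M11 M21) = kron' M21 M11 * Rmat A q qi n₁ := by
  ext ⟨x, y⟩ ⟨u, v⟩
  simpa [kron, kron', Rmat_mul_apply, mul_Rmat_apply, PmatG_mul_apply] using
    hM.block_apply (.inr x) (.inl y) (.inl u) (.inl v)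

theorem IsRTT.block_12_22 (hM : IsRTT q qi 𝕄) :
    Exch 1 M12 M22 (Rmat A q qi m) := by
  ext ⟨x, y⟩ ⟨u, v⟩
  simpa [kron, kron', Rmat_mul_apply, mul_Rmat_apply, PmatG_mul_apply] using
    hM.block_apply (.inl x) (.inr y) (.inr u) (.inr v)

theorem IsRTT.block_22_12 (hM : IsRTT q qi 𝕄) :
    kron M22 M12 + (q - qi) • (PmatG A n₂ m * kron M12 M22) = kron' M22 M12 * Rmat A q qi m := by
  ext ⟨x, y⟩ ⟨u, v⟩
  simpa [kron, kron', Rmat_mul_apply, mul_Rmat_apply, PmatG_mul_apply] using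
    hM.block_apply (.inr x) (.inl y) (.inr u) (.inr v)

theorem IsRTT.block_11_22 (hθ : ∀ a : A, Commute (q - qi) a)
    (hM : IsRTT q qi 𝕄) :
    kron M11 M22 = kron' M11 M22 + (q - qi) • (PmatG A m n₂ * kron M21 M12) := by
  ext ⟨x, y⟩ ⟨u, v⟩
  simpa [kron, kron', Rmat_mul_apply, mul_Rmat_apply, PmatG_mul_apply, (hθ _).eq] using
    hM.block_apply (.inl x) (.inr y) (.inl u) (.inr v)

theorem IsRTT.block_22_11 (hM : IsRTT q qi 𝕄) :
    kron M22 M11 + (q - qi) • (PmatG A n₂ m * kron M12 M21) = kron' M22 M11 := by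
  ext ⟨x, y⟩ ⟨u, v⟩
  simpa [kron, kron', Rmat_mul_apply, mul_Rmat_apply, PmatG_mul_apply] using
    hM.block_apply (.inr x) (.inl y) (.inr u) (.inl v)

theorem IsRTT.block_22_21 (hM : IsRTT q qi 𝕄) :
    Exch (Rmat A q qi n₂) M22 M21 1 := by
  ext ⟨x, y⟩ ⟨u, v⟩
  simpa [kron, kron', Rmat_mul_apply, mul_Rmat_apply, PmatG_mul_apply] using
    hM.block_apply (.inr x) (.inr y) (.inr u) (.inl v)

theorem IsRTT.block_21_22 (hθ : ∀ a : A, Commute (q - qi) a)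
    (hM : IsRTT q qi 𝕄) :
    Rmat A q qi n₂ * kron M21 M22 = kron' M21 M22 + (q - qi) • (PmatG A n₂ n₂ * kron M21 M22) := by
  ext ⟨x, y⟩ ⟨u, v⟩
  simpa [kron, kron', Rmat_mul_apply, mul_Rmat_apply, PmatG_mul_apply, (hθ _).eq] using
    hM.block_apply (.inr x) (.inr y) (.inl u) (.inr v)

theorem IsRTT.block_12_11 (hM : IsRTT q qi 𝕄) :
    Exch (Rmat A q qi m) M12 M11 1 := by
  ext ⟨x, y⟩ ⟨u, v⟩
  simpa [kron, kron', Rmat_mul_apply, mul_Rmat_apply, PmatG_mul_apply] using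
    hM.block_apply (.inl x) (.inl y) (.inr u) (.inl v)

theorem IsRTT.block_11_12 (hθ : ∀ a : A, Commute (q - qi) a)
    (hM : IsRTT q qi 𝕄) :
    Rmat A q qi m * kron M11 M12 = kron' M11 M12 + (q - qi) • (PmatG A m m * kron M11 M12) := by
  ext ⟨x, y⟩ ⟨u, v⟩
  simpa [kron, kron', Rmat_mul_apply, mul_Rmat_apply, PmatG_mul_apply, (hθ _).eq] using
    hM.block_apply (.inl x) (.inl y) (.inl u) (.inr v)

local notation "𝕀" n => (1 : Matrix (Fin n) (Fin n) A)

theorem IsRTT.block_22N11_11 (hqinv' : qi * q = 1) (hN : M12 * N = 1) (hN' : N * M12 = 1)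
    (hM : IsRTT q qi 𝕄) :
    kron (M22 * N * M11) M11 + (q - qi) • (PmatG A n₂ m * kron M11 M21) =
      kron' (M22 * N * M11) M11 * Rmat A q qi n₁ := by
  have hNc := (exch_one_one_iff _ _).1 (hM.block_12_21.inv_left hN' hN)
  have h11 : kron M11 M11 = Rmat A qi q m * kron' M11 M11 * Rmat A q qi n₁ := by
    rw [Matrix.mul_assoc, ← hM.block_11_11, ← Matrix.mul_assoc, Rmat_mul_Rmat qi q hqinv',
      Matrix.one_mul]
  have hNa : kron N (𝕀 m) * Rmat A qi q m * kron (𝕀 m) M11 = kron (𝕀 m) M11 * kron N (𝕀 n₁) := by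
    simpa using hM.block_12_11.inv_conj (Rmat_mul_Rmat qi q hqinv') (Matrix.mul_one 1) hN' hN
  have hθterm : kron M12 M21 * kron N (𝕀 n₁) * kron M11 (𝕀 n₁) * Rmat A q qi n₁ = kron M11 M21 := by
    rw [kron_mul_kron _ _ _ _ fun a b i j => (hNc i j a b).symm, hN, Matrix.mul_one,
      ← kron'_eq_one_kron_mul_kron_one, ← hM.block_11_21, Matrix.one_mul]
  rw [← eq_sub_iff_add_eq]
  calc kron (M22 * N * M11) M11
      = kron M22 (𝕀 m) * kron N (𝕀 m) * kron M11 M11 := by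
        rw [kron_one_mul_kron, kron_one_mul_kron]
    _ = kron M22 (𝕀 m) * (kron N (𝕀 m) * Rmat A qi q m * kron (𝕀 m) M11) *
          kron M11 (𝕀 n₁) * Rmat A q qi n₁ := by
        rw [h11, kron'_eq_one_kron_mul_kron_one]
        simp only [Matrix.mul_assoc]
    _ = kron M22 M11 * kron N (𝕀 n₁) * kron M11 (𝕀 n₁) * Rmat A q qi n₁ := by
        rw [hNa, kron_eq_kron_one_mul_one_kron M22 M11]
        simp only [Matrix.mul_assoc]
    _ = (kron' M22 M11 - (q - qi) • (PmatG A n₂ m * kron M12 M21)) * kron N (𝕀 n₁) *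
          kron M11 (𝕀 n₁) * Rmat A q qi n₁ := by
        rw [← hM.block_22_11, add_sub_cancel_right]
    _ = kron' (M22 * N * M11) M11 * Rmat A q qi n₁ -
          (q - qi) • (PmatG A n₂ m * kron M11 M21) := by
        simp only [Matrix.sub_mul, Matrix.smul_mul, kron'_mul_kron_one, Matrix.mul_assoc]
        rw [← hθterm]
        simp only [Matrix.mul_assoc]

theorem IsRTT.exch_Tneg_one_M11 (hqinv' : qi * q = 1) (hN : M12 * N = 1) (hN' : N * M12 = 1)
    (hM : IsRTT q qi 𝕄) :
    Exch 1 (Tneg M11 N M21 M22 1) M11 (Rmat A q qi n₁) := by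
  rw [Tneg, Exch, Matrix.one_mul, kron_sub_left, kron'_sub_left, Matrix.sub_mul,
    ← hM.block_22N11_11 hqinv' hN hN', ← hM.block_21_11]
  abel

theorem IsRTT.block_22N11_22 (hθ : ∀ a : A, Commute (q - qi) a) (hqinv : q * qi = 1)
    (hN : M12 * N = 1) (hN' : N * M12 = 1) (hM : IsRTT q qi 𝕄) :
    Rmat A q qi n₂ * kron (M22 * N * M11) M22 =
      kron' (M22 * N * M11) M22 + (q - qi) • (PmatG A n₂ n₂ * kron M21 M22) := by
  have hNc := (exch_one_one_iff _ _).1 (hM.block_12_21.inv_left hN' hN)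
  have hNd : kron N (𝕀 n₂) * kron (𝕀 m) M22 = kron (𝕀 m) M22 * Rmat A qi q m * kron N (𝕀 m) := by
    simpa using hM.block_12_22.inv_conj (Matrix.mul_one 1) (Rmat_mul_Rmat q qi hqinv) hN' hN
  have hmain : Rmat A q qi n₂ *
      (kron M22 (𝕀 n₂) * kron N (𝕀 n₂) * (kron (𝕀 m) M22 * kron M11 (𝕀 m))) =
        kron' (M22 * N * M11) M22 :=
    calc _ = Rmat A q qi n₂ * kron M22 M22 * Rmat A qi q m * kron N (𝕀 m) * kron M11 (𝕀 m) := by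
          rw [Matrix.mul_assoc (kron M22 _), ← Matrix.mul_assoc (kron N _), hNd,
            kron_eq_kron_one_mul_one_kron M22 M22]
          simp only [Matrix.mul_assoc]
      _ = kron' (M22 * N * M11) M22 := by
          rw [hM.block_22_22, Matrix.mul_assoc (kron' M22 M22), Rmat_mul_Rmat q qi hqinv,
            Matrix.mul_one, kron'_mul_kron_one, kron'_mul_kron_one]
  have hθterm : Rmat A q qi n₂ * (kron M22 (𝕀 n₂) * kron N (𝕀 n₂) * (PmatG A m n₂ * kron M21 M12)) =
      PmatG A n₂ n₂ * kron M21 M22 :=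
    calc _ = Rmat A q qi n₂ *
          (kron M22 (𝕀 n₂) * (PmatG A m n₂ * (kron (𝕀 n₂) N * kron M21 M12))) := by
          rw [Matrix.mul_assoc (kron M22 _), ← Matrix.mul_assoc (kron N _), kron_one_mul_PmatG,
            Matrix.mul_assoc]
      _ = Rmat A q qi n₂ * (PmatG A n₂ n₂ * kron' M21 M22) := by
          rw [kron_mul_kron _ _ _ _ fun a b i j => hNc a b i j, Matrix.one_mul, hN',
            ← Matrix.mul_assoc (kron M22 _), kron_one_mul_PmatG, Matrix.mul_assoc,
            ← kron'_eq_one_kron_mul_kron_one]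
      _ = PmatG A n₂ n₂ * kron M21 M22 := by
          rw [PmatG_mul_kron', ← Matrix.mul_assoc, hM.block_22_21, Matrix.mul_one, kron'_mul_PmatG]
  calc _ = Rmat A q qi n₂ * (kron M22 (𝕀 n₂) * kron N (𝕀 n₂) * kron M11 M22) := by
        rw [kron_one_mul_kron, kron_one_mul_kron]
    _ = Rmat A q qi n₂ * (kron M22 (𝕀 n₂) * kron N (𝕀 n₂) * (kron (𝕀 m) M22 * kron M11 (𝕀 m))) +
          (q - qi) • (Rmat A q qi n₂ *
            (kron M22 (𝕀 n₂) * kron N (𝕀 n₂) * (PmatG A m n₂ * kron M21 M12))) := by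
        rw [hM.block_11_22 hθ, kron'_eq_one_kron_mul_kron_one, Matrix.mul_add, Matrix.mul_add,
          mul_smul_of_commute hθ, mul_smul_of_commute hθ]
    _ = _ := by rw [hmain, hθterm]

theorem IsRTT.exch_Tneg_one_M22 (hθ : ∀ a : A, Commute (q - qi) a) (hqinv : q * qi = 1)
    (hN : M12 * N = 1) (hN' : N * M12 = 1) (hM : IsRTT q qi 𝕄) :
    Exch (Rmat A q qi n₂) (Tneg M11 N M21 M22 1) M22 1 := by
  rw [Tneg, Exch, Matrix.mul_one, kron_sub_left, kron'_sub_left, Matrix.mul_sub,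
    hM.block_22N11_22 hθ hqinv hN hN', hM.block_21_22 hθ]
  abel

theorem IsRTT.block_22N11_12 (hθ : ∀ a : A, Commute (q - qi) a) (hqinv : q * qi = 1)
    (hqinv' : qi * q = 1) (hN : M12 * N = 1) (hN' : N * M12 = 1) (hM : IsRTT q qi 𝕄) :
    Exch 1 (M22 * N * M11) M12 1 := by
  have hNb : kron N (𝕀 m) * Rmat A qi q m * kron (𝕀 m) M12 =
      kron (𝕀 m) M12 * Rmat A qi q m * kron N (𝕀 m) :=
    hM.block_12_12.inv_conj (Rmat_mul_Rmat qi q hqinv') (Rmat_mul_Rmat q qi hqinv) hN' hN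
  have hbd : kron M12 M22 * Rmat A qi q m = kron' M12 M22 := by
    rw [← Matrix.one_mul (kron M12 M22), hM.block_12_22, Matrix.mul_assoc,
      Rmat_mul_Rmat q qi hqinv, Matrix.mul_one]
  have hmain : kron M22 (𝕀 m) * kron N (𝕀 m) * (Rmat A qi q m * kron' M11 M12) =
      kron' (M22 * N * M11) M12 - (q - qi) • (PmatG A n₂ m * kron' M11 M22) :=
    calc _ = kron M22 (𝕀 m) * (kron N (𝕀 m) * Rmat A qi q m * kron (𝕀 m) M12) * kron M11 (𝕀 m) := by
          rw [kron'_eq_one_kron_mul_kron_one]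
          simp only [Matrix.mul_assoc]
      _ = kron M22 M12 * Rmat A qi q m * kron N (𝕀 m) * kron M11 (𝕀 m) := by
          rw [hNb, kron_eq_kron_one_mul_one_kron M22 M12]
          simp only [Matrix.mul_assoc]
      _ = kron' M22 M12 * kron N (𝕀 m) * kron M11 (𝕀 m) -
            (q - qi) • (PmatG A n₂ m * (kron M12 M22 * Rmat A qi q m) * kron N (𝕀 m) *
              kron M11 (𝕀 m)) := by
          rw [eq_sub_of_add_eq hM.block_22_12, Matrix.sub_mul, Matrix.mul_assoc (kron' M22 M12),
            Rmat_mul_Rmat q qi hqinv, Matrix.mul_one]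
          simp only [Matrix.sub_mul, Matrix.smul_mul, Matrix.mul_assoc]
      _ = _ := by
          rw [hbd, Matrix.mul_assoc (PmatG A n₂ m), Matrix.mul_assoc (PmatG A n₂ m),
            kron'_mul_kron_one, kron'_mul_kron_one, kron'_mul_kron_one, kron'_mul_kron_one, hN,
            Matrix.one_mul]
  have hθterm : kron M22 (𝕀 m) * kron N (𝕀 m) * (PmatG A m m * kron' M11 M12) =
      PmatG A n₂ m * kron' M11 M22 := by
    rw [Matrix.mul_assoc, kron_one_mul_PmatG_mul_kron', kron_one_mul_PmatG_mul_kron', hN',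
      Matrix.mul_one]
  rw [Exch, Matrix.one_mul, Matrix.mul_one]
  calc _ = kron M22 (𝕀 m) * kron N (𝕀 m) * kron M11 M12 := by
        rw [kron_one_mul_kron, kron_one_mul_kron]
    _ = _ := by
        rw [eq_Rmat_inv_mul_add_of_Rmat_mul hθ hqinv' (hM.block_11_12 hθ), Matrix.mul_add,
          mul_smul_of_commute hθ, hmain, hθterm, sub_add_cancel]

theorem IsRTT.exch_Tneg_one_M12 (hθ : ∀ a : A, Commute (q - qi) a) (hqinv : q * qi = 1)
    (hqinv' : qi * q = 1) (hN : M12 * N = 1) (hN' : N * M12 = 1) (hM : IsRTT q qi 𝕄) :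
    Exch 1 (Tneg M11 N M21 M22 1) M12 1 :=
  (hM.block_22N11_12 hθ hqinv hqinv' hN hN').sub_left hM.block_12_21.symm

theorem IsRTT.exch_M22_mul_mul_M11_M21 {W : Matrix (Fin m) (Fin m) A} (hW : Exch 1 W M21 1)
    (hM : IsRTT q qi 𝕄) :
    Exch (Rmat A q qi n₂) (M22 * W * M11) M21 (Rmat A q qi n₁) :=
  (hM.block_22_21.mul_left hW).mul_left hM.block_11_21

theorem IsRTT.exch_Tneg_one_M21 (hN : M12 * N = 1) (hN' : N * M12 = 1)
    (hM : IsRTT q qi 𝕄) :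
    Exch (Rmat A q qi n₂) (Tneg M11 N M21 M22 1) M21 (Rmat A q qi n₁) :=
  (hM.exch_M22_mul_mul_M11_M21 (hM.block_12_21.inv_left hN' hN)).sub_left hM.block_21_21

theorem IsRTT.exch_Tneg_one_M22_mul_mul_M11 (hθ : ∀ a : A, Commute (q - qi) a) (hqinv : q * qi = 1)
    (hqinv' : qi * q = 1) (hN : M12 * N = 1) (hN' : N * M12 = 1) {Y : Matrix (Fin m) (Fin m) A}
    (hY : Exch 1 (Tneg M11 N M21 M22 1) Y 1)
    (hM : IsRTT q qi 𝕄) :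
    Exch (Rmat A q qi n₂) (Tneg M11 N M21 M22 1) (M22 * Y * M11) (Rmat A q qi n₁) :=
  ((hM.exch_Tneg_one_M22 hθ hqinv hN hN').mul_right hY).mul_right
    (hM.exch_Tneg_one_M11 hqinv' hN hN')

end Blocks

theorem stmt7_general (q qi : A) (hq : ∀ a : A, Commute q a) (hqi : ∀ a : A, Commute qi a)
    (hqinv : q * qi = 1) (hqinv' : qi * q = 1)
    (m n₁ n₂ : ℕ)
    (M11 : Matrix (Fin m) (Fin n₁) A) (M12 : Matrix (Fin m) (Fin m) A)
    (M21 : Matrix (Fin n₂) (Fin n₁) A) (M22 : Matrix (Fin n₂) (Fin m) A)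
    (hex : Rmat A q qi (m + n₂) *
        kron (Matrix.reindex finSumFinEquiv finSumFinEquiv (fromBlocks M11 M12 M21 M22))
          (Matrix.reindex finSumFinEquiv finSumFinEquiv (fromBlocks M11 M12 M21 M22)) =
      kron' (Matrix.reindex finSumFinEquiv finSumFinEquiv (fromBlocks M11 M12 M21 M22))
          (Matrix.reindex finSumFinEquiv finSumFinEquiv (fromBlocks M11 M12 M21 M22)) *
        Rmat A q qi (n₁ + m))
    (N : Matrix (Fin m) (Fin m) A) (hN : M12 * N = 1) (hN' : N * M12 = 1) :
    (∀ k : ℕ,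
      Rmat A q qi n₂ * kron (Tneg M11 N M21 M22 1) (Tpos M11 M12 M21 M22 k) =
        kron' (Tneg M11 N M21 M22 1) (Tpos M11 M12 M21 M22 k) * Rmat A q qi n₁) ∧
    (∀ k : ℕ,
      Rmat A q qi n₂ * kron (Tpos M11 M12 M21 M22 k) (Tpos M11 M12 M21 M22 0) =
        kron' (Tpos M11 M12 M21 M22 k) (Tpos M11 M12 M21 M22 0) * Rmat A q qi n₁) ∧
    (∀ k : ℕ, 1 ≤ k →
      Rmat A q qi n₂ * kron (Tneg M11 N M21 M22 1) (Tneg M11 N M21 M22 k) =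
        kron' (Tneg M11 N M21 M22 1) (Tneg M11 N M21 M22 k) * Rmat A q qi n₁) ∧
    (∀ k : ℕ, 1 ≤ k →
      Rmat A q qi n₂ * kron (Tneg M11 N M21 M22 k) (Tpos M11 M12 M21 M22 0) =
        kron' (Tneg M11 N M21 M22 k) (Tpos M11 M12 M21 M22 0) * Rmat A q qi n₁) := by
  have hθ : ∀ a : A, Commute (q - qi) a := fun a => (hq a).sub_left (hqi a)
  have hM : IsRTT q qi (reindex finSumFinEquiv finSumFinEquiv (fromBlocks M11 M12 M21 M22)) := hex
  have hNc : Exch 1 N M21 1 := hM.block_12_21.inv_left hN' hN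
  have hL := hM.exch_Tneg_one_M21 hN hN'
  have hLb := hM.exch_Tneg_one_M12 hθ hqinv hqinv' hN hN'
  have hLN : Exch 1 (Tneg M11 N M21 M22 1) N 1 := (hLb.symm.inv_left hN' hN).symm
  refine ⟨fun k => ?_, fun k => ?_, fun k hk => ?_, fun k hk => ?_⟩
  · rcases k with _ | k
    · exact hL
    · exact hM.exch_Tneg_one_M22_mul_mul_M11 hθ hqinv hqinv' hN hN' (hLb.symm.pow_left k).symm
  · rcases k with _ | k
    · exact hM.block_21_21
    · exact hM.exch_M22_mul_mul_M11_M21 (hM.block_12_21.pow_left k)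
  · rcases k with _ | _ | k
    · omega
    · exact (hM.exch_Tneg_one_M22_mul_mul_M11 hθ hqinv hqinv' hN hN' hLN).sub_right hL
    · exact hM.exch_Tneg_one_M22_mul_mul_M11 hθ hqinv hqinv' hN hN' (hLN.symm.pow_left (k + 2)).symm
  · rcases k with _ | _ | k
    · omega
    · exact hL
    · exact hM.exch_M22_mul_mul_M11_M21 (hNc.pow_left (k + 2))

/-- homogeneous relations with the zero-level elements. -/
theorem stmt7 (q qi : A) (hq : ∀ a : A, Commute q a) (hqi : ∀ a : A, Commute qi a)
    (hqinv : q * qi = 1) (hqinv' : qi * q = 1)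
    (m n₁ n₂ : ℕ) (hm : 1 ≤ m) (hn₁ : 1 ≤ n₁) (hn₂ : 1 ≤ n₂)
    (M11 : Matrix (Fin m) (Fin n₁) A) (M12 : Matrix (Fin m) (Fin m) A)
    (M21 : Matrix (Fin n₂) (Fin n₁) A) (M22 : Matrix (Fin n₂) (Fin m) A)
    (hex : Rmat A q qi (m + n₂) *
        kron (Matrix.reindex finSumFinEquiv finSumFinEquiv (fromBlocks M11 M12 M21 M22))
          (Matrix.reindex finSumFinEquiv finSumFinEquiv (fromBlocks M11 M12 M21 M22)) =
      kron' (Matrix.reindex finSumFinEquiv finSumFinEquiv (fromBlocks M11 M12 M21 M22))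
          (Matrix.reindex finSumFinEquiv finSumFinEquiv (fromBlocks M11 M12 M21 M22)) *
        Rmat A q qi (n₁ + m))
    (N : Matrix (Fin m) (Fin m) A) (hN : M12 * N = 1) (hN' : N * M12 = 1) :
    (∀ k : ℕ,
      Rmat A q qi n₂ * kron (Tneg M11 N M21 M22 1) (Tpos M11 M12 M21 M22 k) =
        kron' (Tneg M11 N M21 M22 1) (Tpos M11 M12 M21 M22 k) * Rmat A q qi n₁) ∧
    (∀ k : ℕ,
      Rmat A q qi n₂ * kron (Tpos M11 M12 M21 M22 k) (Tpos M11 M12 M21 M22 0) =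
        kron' (Tpos M11 M12 M21 M22 k) (Tpos M11 M12 M21 M22 0) * Rmat A q qi n₁) ∧
    (∀ k : ℕ, 1 ≤ k →
      Rmat A q qi n₂ * kron (Tneg M11 N M21 M22 1) (Tneg M11 N M21 M22 k) =
        kron' (Tneg M11 N M21 M22 1) (Tneg M11 N M21 M22 k) * Rmat A q qi n₁) ∧
    (∀ k : ℕ, 1 ≤ k →
      Rmat A q qi n₂ * kron (Tneg M11 N M21 M22 k) (Tpos M11 M12 M21 M22 0) =
        kron' (Tneg M11 N M21 M22 k) (Tpos M11 M12 M21 M22 0) * Rmat A q qi n₁) :=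
  stmt7_general q qi hq hqi hqinv hqinv' m n₁ n₂ M11 M12 M21 M22 hex N hN hN'
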